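/- arXiv:1405.3267 — 3 statements merged into one kernel-verified Lean document; each statement's English description precedes it below -/
import Mathlib

section
/- Let n be even, and let A, B be the two communities each of size n/2. If the maximum likelihood (min-bisection) estimator does not output the ground-truth partition (A,B), then there exists 1 ≤ k ≤ n/4 and sets A_w ⊆ A, B_w ⊆ B with |A_w| = |B_w| = k such that E(A_w, B∖B_w) + E(B_w, A∖A_w) ≥ E(A_w, A∖A_w) + E(B_w, B∖B_w), where E(S,T) counts the edges between vertex sets S and T. -/
/-!
Write `Aw := A \ Z` and `Bw := B ∩ Z` for a competing bisection `Z`, so that `Z` arises from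
`(A, B)` by exchanging `Aw` and `Bw`. Splitting both cuts into the four blocks
`Aw, A \ Aw, Bw, B \ Bw` gives the exact identity
`E(Z, Zᶜ) + E(Aw, B \ Bw) + E(Bw, A \ Aw) = E(A, B) + E(Aw, A \ Aw) + E(Bw, B \ Bw)`,
so `E(Z, Zᶜ) ≤ E(A, B)` is the required inequality. Both sets have the same size `k ≥ 1` since
`Z ≠ A` is balanced, and passing to `Zᶜ` (again balanced, distinct from `A` as `Z ≠ B`, with the
same cut) replaces `k` by `n/2 - k`, so one may take `k ≤ n/4`.
-/

/-- Number of edges of `G` between two (disjoint) vertex sets `S` and `T`. -/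
def edgeCount {V : Type*} [Fintype V] [DecidableEq V] (G : SimpleGraph V)
    [DecidableRel G.Adj] (S T : Finset V) : ℕ :=
  ((S ×ˢ T).filter fun p => G.Adj p.1 p.2).card

open Finset

section EdgeCount

variable {V : Type*} [Fintype V] [DecidableEq V] (G : SimpleGraph V) [DecidableRel G.Adj]

theorem edgeCount_comm (S T : Finset V) : edgeCount G S T = edgeCount G T S :=
  have := G.symm
  Rel.card_interedges_comm S T

variable {G}

theorem edgeCount_union_left {S S' : Finset V} (h : Disjoint S S') (T : Finset V) :
    edgeCount G (S ∪ S') T = edgeCount G S T + edgeCount G S' T := by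
  rw [edgeCount, union_product, filter_union]
  exact card_union_of_disjoint (G.interedges_disjoint_left h T)

theorem edgeCount_union_right (S : Finset V) {T T' : Finset V} (h : Disjoint T T') :
    edgeCount G S (T ∪ T') = edgeCount G S T + edgeCount G S T' := by
  rw [edgeCount_comm, edgeCount_union_left h, edgeCount_comm G T, edgeCount_comm G T']

theorem edgeCount_swap_add {A₁ A₂ B₁ B₂ : Finset V} (hA : Disjoint A₁ A₂) (hB : Disjoint B₁ B₂)
    (hAB : Disjoint (A₁ ∪ A₂) (B₁ ∪ B₂)) :
    edgeCount G (A₂ ∪ B₁) (B₂ ∪ A₁) + edgeCount G A₁ B₂ + edgeCount G B₁ A₂ =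
      edgeCount G (A₁ ∪ A₂) (B₁ ∪ B₂) + edgeCount G A₁ A₂ + edgeCount G B₁ B₂ := by
  rw [disjoint_union_left, disjoint_union_right, disjoint_union_right] at hAB
  obtain ⟨⟨-, h12⟩, h21, -⟩ := hAB
  rw [edgeCount_union_left h21, edgeCount_union_right _ h12.symm,
    edgeCount_union_right _ h12.symm, edgeCount_union_left hA, edgeCount_union_right _ hB,
    edgeCount_union_right _ hB, edgeCount_comm G B₁ A₁, edgeCount_comm G A₂ A₁,
    edgeCount_comm G B₁ A₂]
  omega

theorem edgeCount_swap_ge_of_cut_le {A B Aw Bw : Finset V} (hAB : Disjoint A B) (hAw : Aw ⊆ A)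
    (hBw : Bw ⊆ B) (hcut : edgeCount G (A \ Aw ∪ Bw) (B \ Bw ∪ Aw) ≤ edgeCount G A B) :
    edgeCount G Aw (B \ Bw) + edgeCount G Bw (A \ Aw) ≥
      edgeCount G Aw (A \ Aw) + edgeCount G Bw (B \ Bw) := by
  have swap := edgeCount_swap_add (G := G) (disjoint_sdiff (s := Aw) (t := A))
    (disjoint_sdiff (s := Bw) (t := B))
    (by rwa [union_sdiff_of_subset hAw, union_sdiff_of_subset hBw])
  rw [union_sdiff_of_subset hAw, union_sdiff_of_subset hBw] at swap
  omega

end EdgeCount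

theorem IsCompl.sdiff_sdiff_sup_inf {α : Type*} [BooleanAlgebra α] {a b : α} (h : IsCompl a b)
    (z : α) : a \ (a \ z) ⊔ b ⊓ z = z := by
  rw [sdiff_sdiff_right_self, ← inf_sup_right, h.sup_eq_top, top_inf_eq]

theorem IsCompl.sdiff_inf_sup_sdiff {α : Type*} [BooleanAlgebra α] {a b : α} (h : IsCompl a b)
    (z : α) : b \ (b ⊓ z) ⊔ a \ z = zᶜ := by
  rw [sdiff_inf_self_left, ← sup_sdiff, h.symm.sup_eq_top, top_sdiff]

theorem IsCompl.card_inter_eq_card_sdiff {V : Type*} [Fintype V] [DecidableEq V] {A B : Finset V}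
    (h : IsCompl A B) {Z : Finset V} (hZ : #Z = #A) :
    #(B ∩ Z) = #(A \ Z) := by
  rw [← h.compl_eq, inter_comm, ← sdiff_eq_inter_compl]
  exact card_sdiff_comm hZ

theorem stmt_10 {V : Type*} [Fintype V] [DecidableEq V] (G : SimpleGraph V)
    [DecidableRel G.Adj] (n : ℕ) (hn : Fintype.card V = n) (hneven : 2 ∣ n)
    (A B : Finset V) (hAB : Disjoint A B) (hABunion : A ∪ B = Finset.univ)
    (hA : A.card = n / 2)
    -- the min-bisection (maximum likelihood) estimator does not output (A,B):
    -- some balanced partition different from (A,B) has a cut at most as small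
    (hML : ∃ Z : Finset V, Z.card = n / 2 ∧ Z ≠ A ∧ Z ≠ B ∧
      edgeCount G Z Zᶜ ≤ edgeCount G A B) :
    ∃ k : ℕ, 1 ≤ k ∧ k ≤ n / 4 ∧
      ∃ Aw Bw : Finset V, Aw ⊆ A ∧ Bw ⊆ B ∧ Aw.card = k ∧ Bw.card = k ∧
        edgeCount G Aw (B \ Bw) + edgeCount G Bw (A \ Aw) ≥
          edgeCount G Aw (A \ Aw) + edgeCount G Bw (B \ Bw) := by
  obtain ⟨Z, hZcard, hZA, hZB, hZcut⟩ := hML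
  have hcompl : IsCompl A B := ⟨hAB, codisjoint_iff.2 hABunion⟩
  wlog hk : #(A \ Z) ≤ n / 4 generalizing Z
  · refine this Zᶜ ?_ ?_ ?_ ?_ ?_
    · rw [card_compl, hn, hZcard]
      omega
    · exact fun h ↦ hZB (by rw [← hcompl.compl_eq, ← h, compl_compl])
    · exact fun h ↦ hZA (by rw [← hcompl.symm.compl_eq, ← h, compl_compl])
    · rwa [compl_compl, edgeCount_comm]
    · have := card_inter_add_card_sdiff A Z
      rw [sdiff_compl, inf_eq_inter]
      omega
  have hZA_card : #Z = #A := hZcard.trans hA.symm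
  have hk_pos : 0 < #(A \ Z) :=
    card_pos.2 <| sdiff_nonempty.2 fun hAZ ↦ hZA (eq_of_subset_of_card_le hAZ hZA_card.le).symm
  refine ⟨#(A \ Z), hk_pos, hk, A \ Z, B ∩ Z, sdiff_subset, inter_subset_left, rfl,
    hcompl.card_inter_eq_card_sdiff hZA_card, edgeCount_swap_ge_of_cut_le hAB sdiff_subset
    inter_subset_left ?_⟩
  convert hZcut using 2
  · exact hcompl.sdiff_sdiff_sup_inf Z
  · exact hcompl.sdiff_inf_sup_sdiff Z
end

section
/- Let B be a symmetric n×n real matrix with zero diagonal, g ∈ {±1}ⁿ, and let Y be the diagonal matrix with Y_{ii} = (B g g^T)_{ii}. If Y − B ⪰ 0, then X = g gᵀ is an optimal solution of the SDP: maximize Tr(BX) subject to X_{ii} = 1 for all i and X ⪰ 0. If in addition the second smallest eigenvalue of Y − B is strictly positive (i.e., the kernel of Y − B is spanned by g), then g gᵀ is the unique optimal solution. -/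
/-!
Weak duality with the diagonal certificate `Y`. Since `Y` is diagonal and a feasible `X` has unit
diagonal, `Tr(Y X) = Tr Y = Tr(B g gᵀ)`, so `Tr(B g gᵀ) - Tr(B X) = Tr((Y - B) X)`, which is
nonnegative as the trace of a product of two positive semidefinite matrices. If it vanishes, then
`(Y - B) X = 0`, so every column of `X` lies in `ker (Y - B) = span g`, and the unit diagonal
forces `X = g gᵀ`.
-/

namespace Matrix

section PosSemidef

open scoped MatrixOrder ComplexOrder

variable {n 𝕜 : Type*} [Fintype n] [RCLike 𝕜] {A X : Matrix n n 𝕜}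

lemma trace_conjTranspose_mul_self_mul_conjTranspose_mul_self (B C : Matrix n n 𝕜) :
    (Bᴴ * B * (Cᴴ * C)).trace = ((B * Cᴴ)ᴴ * (B * Cᴴ)).trace := by
  rw [← mul_assoc, trace_mul_comm, conjTranspose_mul, conjTranspose_conjTranspose]
  simp only [mul_assoc]

lemma PosSemidef.trace_mul_nonneg (hA : A.PosSemidef) (hX : X.PosSemidef) :
    0 ≤ (A * X).trace := by
  classical
  obtain ⟨B, rfl⟩ := CStarAlgebra.nonneg_iff_eq_star_mul_self.mp hA.nonneg
  obtain ⟨C, rfl⟩ := CStarAlgebra.nonneg_iff_eq_star_mul_self.mp hX.nonneg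
  rw [star_eq_conjTranspose, star_eq_conjTranspose,
    trace_conjTranspose_mul_self_mul_conjTranspose_mul_self]
  exact (posSemidef_conjTranspose_mul_self _).trace_nonneg

lemma PosSemidef.mul_eq_zero_of_trace_mul_eq_zero (hA : A.PosSemidef) (hX : X.PosSemidef)
    (h : (A * X).trace = 0) : A * X = 0 := by
  classical
  obtain ⟨B, rfl⟩ := CStarAlgebra.nonneg_iff_eq_star_mul_self.mp hA.nonneg
  obtain ⟨C, rfl⟩ := CStarAlgebra.nonneg_iff_eq_star_mul_self.mp hX.nonneg
  rw [star_eq_conjTranspose, star_eq_conjTranspose,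
    trace_conjTranspose_mul_self_mul_conjTranspose_mul_self,
    trace_conjTranspose_mul_self_eq_zero_iff] at h
  rw [star_eq_conjTranspose, star_eq_conjTranspose, mul_assoc, ← mul_assoc B, h, zero_mul,
    mul_zero]

end PosSemidef

variable {n R : Type*} [Fintype n] [CommRing R]

lemma trace_diagonal_mul_of_diag_eq_one [DecidableEq n] (d : n → R) {X : Matrix n n R}
    (hX : ∀ i, X i i = 1) : (diagonal d * X).trace = (diagonal d).trace := by
  simp [trace, diagonal_mul, hX]

lemma eq_vecMulVec_of_mul_eq_zero {M X : Matrix n n R} {g : n → R} (hg : ∀ i, g i * g i = 1)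
    (hker : ∀ v, M *ᵥ v = 0 → ∃ c : R, v = c • g) (hMX : M * X = 0) (hX : ∀ i, X i i = 1) :
    X = vecMulVec g g := by
  ext i j
  obtain ⟨c, hc⟩ := hker (Xᵀ j) (funext fun i => congrFun (congrFun hMX i) j)
  have hcol : ∀ i, X i j = c * g i := fun i => by simpa using congrFun hc i
  have hcg : c = g j := by
    rw [← mul_one c, ← hg j, ← mul_assoc, ← hcol j, hX j, one_mul]
  rw [hcol i, hcg, vecMulVec_apply, mul_comm]

end Matrix

theorem stmt_16_general (n : ℕ) (B : Matrix (Fin n) (Fin n) ℝ)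
    (g : Fin n → ℝ) (hg : ∀ i, g i = 1 ∨ g i = -1)
    (Y : Matrix (Fin n) (Fin n) ℝ)
    (hY : Y = Matrix.diagonal fun i => (B * Matrix.vecMulVec g g) i i)
    (hpsd : (Y - B).PosSemidef) :
    (∀ X : Matrix (Fin n) (Fin n) ℝ, X.PosSemidef → (∀ i, X i i = 1) →
      (B * X).trace ≤ (B * Matrix.vecMulVec g g).trace) ∧
    ((∀ v : Fin n → ℝ, (Y - B).mulVec v = 0 → ∃ c : ℝ, v = c • g) →
      ∀ X : Matrix (Fin n) (Fin n) ℝ, X.PosSemidef → (∀ i, X i i = 1) →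
        (B * X).trace = (B * Matrix.vecMulVec g g).trace →
        X = Matrix.vecMulVec g g) := by
  have hgap : ∀ X : Matrix (Fin n) (Fin n) ℝ, (∀ i, X i i = 1) →
      (B * Matrix.vecMulVec g g).trace - (B * X).trace = ((Y - B) * X).trace := fun X hX => by
    rw [Matrix.sub_mul, Matrix.trace_sub, hY, Matrix.trace_diagonal_mul_of_diag_eq_one _ hX,
      Matrix.trace_diagonal]
    rfl
  refine ⟨fun X hX hXdiag => ?_, fun hker X hX hXdiag hopt => ?_⟩
  · linarith [hgap X hXdiag, hpsd.trace_mul_nonneg hX]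
  · have hgg : ∀ i, g i * g i = 1 := fun i => by rcases hg i with h | h <;> simp [h]
    refine Matrix.eq_vecMulVec_of_mul_eq_zero hgg hker
      (hpsd.mul_eq_zero_of_trace_mul_eq_zero hX ?_) hXdiag
    linarith [hgap X hXdiag]

theorem stmt_16 (n : ℕ) (B : Matrix (Fin n) (Fin n) ℝ)
    (hBsym : B.IsSymm) (hBdiag : ∀ i, B i i = 0)
    (g : Fin n → ℝ) (hg : ∀ i, g i = 1 ∨ g i = -1)
    (Y : Matrix (Fin n) (Fin n) ℝ)
    (hY : Y = Matrix.diagonal fun i => (B * Matrix.vecMulVec g g) i i)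
    (hpsd : (Y - B).PosSemidef) :
    (∀ X : Matrix (Fin n) (Fin n) ℝ, X.PosSemidef → (∀ i, X i i = 1) →
      (B * X).trace ≤ (B * Matrix.vecMulVec g g).trace) ∧
    ((∀ v : Fin n → ℝ, (Y - B).mulVec v = 0 → ∃ c : ℝ, v = c • g) →
      ∀ X : Matrix (Fin n) (Fin n) ℝ, X.PosSemidef → (∀ i, X i i = 1) →
        (B * X).trace = (B * Matrix.vecMulVec g g).trace →
        X = Matrix.vecMulVec g g) :=
  stmt_16_general n B g hg Y hY hpsd
end

section
/- For a random graph on m = ⌊n/(log n)³⌋ vertices where each edge appears independently with probability α·log(n)/n (α > 0 fixed), the probability that some vertex has degree at least log(n)/log log(n) is at most exp(−(2 − o(1))·log n); in particular, for sufficiently large n, with probability at least 9/10 every vertex has degree strictly less than log(n)/log log(n). -/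
open ProbabilityTheory MeasureTheory Filter
open scoped ENNReal

/-!
Let `L = log n`, `ℓ = log L`, `m = ⌊n / L³⌋`, `p = α L / n` and `k = ⌈L / ℓ⌉`. The edges at a
vertex are independent, so a union bound over vertices and over `k`-sets of neighbours bounds the
probability of a vertex of degree at least `k` by `m · C(m - 1, k) · p ^ k ≤ m · (e m p / k) ^ k`.
Since `m ≤ n / L³`, `m p ≤ α / L²`, `1 / k ≤ ℓ / L` and, for large `n`, `e α ℓ ≤ L³`, this is at
most `(n / L³) · (e α ℓ / L³) ^ (L / ℓ) = exp (-2 L - 3 ℓ + (L / ℓ) (1 + log α + log ℓ))`,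
that is `exp (-(2 - o(1)) L)`.
-/

open Real
open scoped Nat

section Degrees

open Finset

variable {Ω : Type*} [MeasurableSpace Ω] {μ : Measure Ω}

theorem measure_le_card_filter_le_choose_mul_pow {ι : Type*} [Fintype ι] {Z : ι → Ω → Bool}
    (hZ : iIndepFun Z μ) {p : ℝ≥0∞} (hp : ∀ i, μ {ω | Z i ω = true} = p) (k : ℕ) :
    μ {ω | k ≤ #{i | Z i ω = true}} ≤ (Fintype.card ι).choose k * p ^ k := by
  classical
  have hcover : {ω | k ≤ #{i | Z i ω = true}} ⊆
      ⋃ S ∈ powersetCard k (univ : Finset ι), ⋂ i ∈ S, Z i ⁻¹' {true} := by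
    intro ω hω
    obtain ⟨S, hS, hcard⟩ := exists_subset_card_eq hω
    simp only [Set.mem_iUnion, Set.mem_iInter, mem_powersetCard]
    exact ⟨S, ⟨subset_univ S, hcard⟩, fun i hi => (mem_filter.1 (hS hi)).2⟩
  have hinter : ∀ S ∈ powersetCard k (univ : Finset ι),
      μ (⋂ i ∈ S, Z i ⁻¹' {true}) = p ^ k := by
    intro S hS
    rw [hZ.measure_inter_preimage_eq_mul S (fun _ _ => trivial)]
    simp only [Set.preimage, Set.mem_singleton_iff, hp, prod_const, (mem_powersetCard.1 hS).2]
  calc μ {ω | k ≤ #{i | Z i ω = true}}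
      ≤ ∑ S ∈ powersetCard k (univ : Finset ι), μ (⋂ i ∈ S, Z i ⁻¹' {true}) :=
        (measure_mono hcover).trans (measure_biUnion_finset_le _ _)
    _ = (Fintype.card ι).choose k * p ^ k := by
        rw [sum_congr rfl hinter, sum_const, card_powersetCard, card_univ, nsmul_eq_mul]

theorem min_max_injective {V : Type*} [LinearOrder V] (v : V) :
    Function.Injective fun u => (min u v, max u v) := by
  intro u w h
  simp only [Prod.mk.injEq] at h
  rcases le_total u v with hu | hu <;> rcases le_total w v with hw | hw <;> simp_all

theorem card_filter_subtype_ne {V : Type*} [Fintype V] [DecidableEq V] (v : V) (P : V → Prop)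
    [DecidablePred P] : #{u : {u // u ≠ v} | P u} = #{u | u ≠ v ∧ P u} :=
  card_bij (fun u _ => u.1) (by simp +contextual) (by simp) (by simp +contextual)

variable {V : Type*} [LinearOrder V] {X : V → V → Ω → Bool}

theorem iIndepFun_star (hsym : ∀ u v, X u v = X v u)
    (hind : iIndepFun (fun q : {q : V × V // q.1 < q.2} => X q.1.1 q.1.2) μ) (v : V) :
    iIndepFun (fun u : {u // u ≠ v} => X u v) μ := by
  have hinj : Function.Injective fun u : {u // u ≠ v} =>
      (⟨(min u.1 v, max u.1 v), min_lt_max.2 u.2⟩ : {q : V × V // q.1 < q.2}) :=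
    fun u w h => Subtype.ext (min_max_injective v (congrArg Subtype.val h))
  convert hind.precomp hinj using 2 with u
  rcases le_total u.1 v with h | h
  · simp [h]
  · simp [h, hsym u.1 v]

theorem measure_exists_le_degree_le [Fintype V] (hsym : ∀ u v, X u v = X v u)
    (hind : iIndepFun (fun q : {q : V × V // q.1 < q.2} => X q.1.1 q.1.2) μ) {p : ℝ≥0∞}
    (hp : ∀ u v, u ≠ v → μ {ω | X u v ω = true} = p) (k : ℕ) :
    μ {ω | ∃ v, k ≤ #{u | u ≠ v ∧ X u v ω = true}} ≤
      Fintype.card V * (Fintype.card V - 1).choose k * p ^ k := by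
  have hvertex (v : V) : μ {ω | k ≤ #{u | u ≠ v ∧ X u v ω = true}} ≤
      (Fintype.card V - 1).choose k * p ^ k := by
    have h := measure_le_card_filter_le_choose_mul_pow
      (iIndepFun_star hsym hind v) (fun u => hp u v u.2) k
    convert h using 4 with ω
    · rw [card_filter_subtype_ne v (fun u => X u v ω = true)]
    · simp
  calc μ {ω | ∃ v, k ≤ #{u | u ≠ v ∧ X u v ω = true}}
      ≤ ∑ v, μ {ω | k ≤ #{u | u ≠ v ∧ X u v ω = true}} := by
        rw [Set.ofPred_exists]; exact measure_iUnion_fintype_le _ _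
    _ ≤ ∑ _v : V, (Fintype.card V - 1).choose k * p ^ k := sum_le_sum fun v _ => hvertex v
    _ = Fintype.card V * (Fintype.card V - 1).choose k * p ^ k := by
        rw [sum_const, card_univ, nsmul_eq_mul, mul_assoc]

theorem measure_exists_le_degree_le_ofReal [Fintype V] (hsym : ∀ u v, X u v = X v u)
    (hind : iIndepFun (fun q : {q : V × V // q.1 < q.2} => X q.1.1 q.1.2) μ) {p : ℝ}
    (hp0 : 0 ≤ p) (hp : ∀ u v, u ≠ v → μ {ω | X u v ω = true} = ENNReal.ofReal p) (t : ℝ) :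
    μ {ω | ∃ v, t ≤ (#{u | u ≠ v ∧ X u v ω = true} : ℝ)} ≤
      ENNReal.ofReal (Fintype.card V * ((Fintype.card V - 1).choose ⌈t⌉₊ : ℕ) * p ^ ⌈t⌉₊) := by
  simp only [← Nat.ceil_le]
  rw [ENNReal.ofReal_mul (by positivity), ENNReal.ofReal_mul (by positivity),
    ENNReal.ofReal_pow hp0, ENNReal.ofReal_natCast, ENNReal.ofReal_natCast]
  exact measure_exists_le_degree_le hsym hind hp _

end Degrees

theorem Nat.cast_choose_mul_pow_le (m k : ℕ) {x : ℝ} (hx : 0 ≤ x) :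
    (m.choose k : ℝ) * x ^ k ≤ (exp 1 * m * x / k) ^ k := by
  rcases Nat.eq_zero_or_pos k with rfl | hk
  · simp
  have hk' : (0 : ℝ) < k := by exact_mod_cast hk
  have hfact : (k : ℝ) ^ k / k ! ≤ exp 1 ^ k := by
    rw [← exp_nat_mul, mul_one]; exact pow_div_factorial_le_exp _ hk'.le k
  calc (m.choose k : ℝ) * x ^ k ≤ (m : ℝ) ^ k / k ! * x ^ k := by
        gcongr; exact Nat.choose_le_pow_div k m
    _ = (m * x / k) ^ k * ((k : ℝ) ^ k / k !) := by
        rw [div_pow, mul_pow]; field_simp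
    _ ≤ (m * x / k) ^ k * exp 1 ^ k := by gcongr
    _ = (exp 1 * m * x / k) ^ k := by rw [← mul_pow]; ring

theorem tendsto_const_add_log_div_self_atTop (c : ℝ) :
    Tendsto (fun y => (c + log y) / y) atTop (nhds 0) := by
  have h := (tendsto_const_nhds (x := c)).div_atTop tendsto_id |>.add
    isLittleO_log_id_atTop.tendsto_div_nhds_zero
  simpa [add_div] using h

theorem eventually_mul_log_le_pow_three (c : ℝ) : ∀ᶠ y in atTop, c * log y ≤ y ^ 3 := by
  filter_upwards [eventually_ge_atTop 1, eventually_ge_atTop c] with y hy1 hyc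
  have h0 : 0 ≤ log y := log_nonneg hy1
  have h1 : log y ≤ y := log_le_self (by linarith)
  nlinarith [mul_le_mul_of_nonneg_right hyc h0, mul_le_mul_of_nonneg_left h1 (by linarith : 0 ≤ y)]

noncomputable def degreeTailCorrection (α : ℝ) (n : ℕ) : ℝ :=
  (1 + log α + log (log (log n))) / log (log n) - 3 * (log (log n) / log n)

theorem tendsto_degreeTailCorrection (α : ℝ) :
    Tendsto (degreeTailCorrection α) atTop (nhds 0) := by
  have hlog : Tendsto (fun n : ℕ => log n) atTop atTop :=
    tendsto_log_atTop.comp tendsto_natCast_atTop_atTop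
  have h := ((tendsto_const_add_log_div_self_atTop (1 + log α)).comp
    (tendsto_log_atTop.comp hlog)).sub
    (((tendsto_const_add_log_div_self_atTop 0).comp hlog).const_mul 3)
  unfold degreeTailCorrection
  simpa [Function.comp_def] using h

theorem exp_neg_two_sub_degreeTailCorrection_mul {α : ℝ} (hα : 0 < α) {n : ℕ}
    (hn : 1 < log n) :
    exp (-(2 - degreeTailCorrection α n) * log n) =
      n / log n ^ 3 * (exp 1 * α * log (log n) / log n ^ 3) ^ (log n / log (log n)) := by
  have hn0 : (0 : ℝ) < n :=
    Nat.cast_pos.2 (Nat.pos_of_ne_zero (by rintro rfl; norm_num at hn))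
  have hL : 0 < log n := by linarith
  have hℓ : 0 < log (log n) := log_pos hn
  rw [rpow_def_of_pos (by positivity), ← exp_log (by positivity : (0 : ℝ) < n / log n ^ 3),
    ← exp_add, degreeTailCorrection]
  congr 1
  rw [log_div (by positivity) (by positivity), log_pow, log_div (by positivity) (by positivity),
    log_mul (by positivity) hℓ.ne', log_mul (by positivity) hα.ne', log_exp, log_pow]
  field_simp
  ring

theorem degree_tail_le_exp {α : ℝ} (hα : 0 < α) {n : ℕ} (hn : 1 < log n)
    (hbase : exp 1 * α * log (log n) ≤ log n ^ 3) :
    (⌊n / log n ^ 3⌋₊ : ℝ) * ((⌊n / log n ^ 3⌋₊ - 1).choose ⌈log n / log (log n)⌉₊ : ℕ) *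
        (α * log n / n) ^ ⌈log n / log (log n)⌉₊ ≤
      exp (-(2 - degreeTailCorrection α n) * log n) := by
  rw [exp_neg_two_sub_degreeTailCorrection_mul hα hn]
  set L := log n
  set ℓ := log L
  set M := ⌊n / L ^ 3⌋₊
  set k := ⌈L / ℓ⌉₊
  set q := exp 1 * α * ℓ / L ^ 3
  have hn0 : (0 : ℝ) < n :=
    Nat.cast_pos.2 (Nat.pos_of_ne_zero (by rintro rfl; norm_num [L] at hn))
  have hL : 0 < L := by linarith
  have hℓ : 0 < ℓ := log_pos hn
  have hk : L / ℓ ≤ k := Nat.le_ceil _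
  have hM : (M : ℝ) ≤ n / L ^ 3 := Nat.floor_le (by positivity)
  have hq : 0 < q := by positivity
  have hq1 : q ≤ 1 := (div_le_one (by positivity)).2 hbase
  have hratio : exp 1 * M * (α * L / n) / k ≤ q := by
    calc exp 1 * M * (α * L / n) / k ≤ exp 1 * (n / L ^ 3) * (α * L / n) / (L / ℓ) := by
          gcongr
      _ = q := by simp only [q]; field_simp
  calc (M : ℝ) * ((M - 1).choose k : ℕ) * (α * L / n) ^ k
      ≤ M * ((M.choose k : ℝ) * (α * L / n) ^ k) := by
        rw [mul_assoc]; gcongr; exact Nat.sub_le _ _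
    _ ≤ (n / L ^ 3) * q ^ k := by
        gcongr
        exact (Nat.cast_choose_mul_pow_le M k (by positivity)).trans (by gcongr)
    _ ≤ (n / L ^ 3) * q ^ (L / ℓ) := by
        gcongr
        rw [← rpow_natCast]
        exact rpow_le_rpow_of_exponent_ge hq hq1 hk

theorem stmt_18 (α : ℝ) (hα : 0 < α) :
    ∃ f : ℕ → ℝ, Tendsto f atTop (nhds 0) ∧
      ∀ᶠ n : ℕ in atTop,
        ∀ (Ω : Type) (_ : MeasurableSpace Ω) (μ : Measure Ω), IsProbabilityMeasure μ →
          ∀ X : Fin (Nat.floor ((n : ℝ) / (Real.log n) ^ 3)) →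
                Fin (Nat.floor ((n : ℝ) / (Real.log n) ^ 3)) → Ω → Bool,
            (∀ u v, X u v = X v u) →
            iIndepFun
              (fun p : {q : Fin (Nat.floor ((n : ℝ) / (Real.log n) ^ 3)) ×
                            Fin (Nat.floor ((n : ℝ) / (Real.log n) ^ 3)) // q.1 < q.2} =>
                X p.1.1 p.1.2) μ →
            (∀ u v, u ≠ v → μ {ω | X u v ω = true} = ENNReal.ofReal (α * Real.log n / n)) →
            μ {ω | ∃ v, Real.log n / Real.log (Real.log n) ≤
                ((Finset.univ.filter fun u => u ≠ v ∧ X u v ω = true).card : ℝ)} ≤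
              ENNReal.ofReal (Real.exp (-(2 - f n) * Real.log n)) ∧
            μ {ω | ∃ v, Real.log n / Real.log (Real.log n) ≤
                ((Finset.univ.filter fun u => u ≠ v ∧ X u v ω = true).card : ℝ)} ≤
              1 / 10 := by
  have hlog : Tendsto (fun n : ℕ => log n) atTop atTop :=
    tendsto_log_atTop.comp tendsto_natCast_atTop_atTop
  have hsmall : ∀ᶠ n : ℕ in atTop, exp (-(2 - degreeTailCorrection α n) * log n) ≤ 1 / 10 :=
    (tendsto_exp_atBot.comp <| ((tendsto_degreeTailCorrection α).const_sub 2).neg.neg_mul_atTop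
      (by norm_num) hlog).eventually (ge_mem_nhds (by norm_num))
  refine ⟨degreeTailCorrection α, tendsto_degreeTailCorrection α, ?_⟩
  filter_upwards [hlog.eventually_gt_atTop 1,
    hlog.eventually (eventually_mul_log_le_pow_three (exp 1 * α)), hsmall]
    with n hn hbase hexp _ _ μ _ X hsym hind hedge
  have hP : _ ≤ ENNReal.ofReal (exp (-(2 - degreeTailCorrection α n) * log n)) :=
    (measure_exists_le_degree_le_ofReal hsym hind (by positivity) hedge _).trans
      (ENNReal.ofReal_le_ofReal (by rw [Fintype.card_fin]; exact degree_tail_le_exp hα hn hbase))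
  exact ⟨hP, hP.trans ((ENNReal.ofReal_le_ofReal hexp).trans_eq
    (by simp : ENNReal.ofReal (1 / 10) = 1 / 10))⟩
end
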